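/- Let P be an n×n nonnegative matrix and let α be a distinguished class of P, i.e. a class of the digraph of P with ρ(P_{ββ}) < ρ(P_{αα}) for every class β ≠ α having access to α. Then there exists a nonnegative eigenvector x of P for the eigenvalue ρ(P_{αα}) whose support is exactly the set of indices having access to α, and such an eigenvector is unique up to positive scalar multiples. -/

import Mathlib

open Matrix

/-- `i` has access to `j` in the digraph of `P` (edge `a → b` when `P a b > 0`). -/
def Access {n : ℕ} (P : Matrix (Fin n) (Fin n) ℝ) (i j : Fin n) : Prop :=
  Relation.ReflTransGen (fun a b => 0 < P a b) i j

/-- `α` is a class of `P`: a strongly connected component of the digraph of `P`. -/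
def IsClass {n : ℕ} (P : Matrix (Fin n) (Fin n) ℝ) (α : Finset (Fin n)) : Prop :=
  ∃ i ∈ α, ∀ j, j ∈ α ↔ (Access P i j ∧ Access P j i)

/-- Class `β` has access to class `α`. -/
def ClassAccess {n : ℕ} (P : Matrix (Fin n) (Fin n) ℝ) (β α : Finset (Fin n)) : Prop :=
  ∃ i ∈ β, ∃ j ∈ α, Access P i j

/-- Spectral radius (over `ℂ`) of the principal submatrix of `P` indexed by `α`. -/
noncomputable def subRad {n : ℕ} (P : Matrix (Fin n) (Fin n) ℝ) (α : Finset (Fin n)) : ℝ :=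
  sSup {r : ℝ | ∃ μ : ℂ,
    μ ∈ spectrum ℂ ((P.submatrix (fun i : {x // x ∈ α} => (i : Fin n)) (fun i : {x // x ∈ α} => (i : Fin n))).map (algebraMap ℝ ℂ)) ∧
    r = ‖μ‖}

/-- `α` is a distinguished class of `P`. -/
def IsDistinguishedClass {n : ℕ} (P : Matrix (Fin n) (Fin n) ℝ) (α : Finset (Fin n)) : Prop :=
  IsClass P α ∧ ∀ β, IsClass P β → β ≠ α → ClassAccess P β α → subRad P β < subRad P α

section PerronGeneral
variable {m : Type*} [Fintype m] [DecidableEq m]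

lemma pow_entry_nonneg (A : Matrix m m ℝ) (hA : ∀ i j, 0 ≤ A i j) (k : ℕ) :
    ∀ i j, 0 ≤ (A ^ k) i j := by
  induction k with
  | zero => intro i j; simp [Matrix.one_apply]; positivity
  | succ k ih =>
    intro i j
    rw [pow_succ, Matrix.mul_apply]
    exact Finset.sum_nonneg fun l _ => mul_nonneg (ih i l) (hA l j)

lemma mulVec_nonneg (A : Matrix m m ℝ) (hA : ∀ i j, 0 ≤ A i j) (v : m → ℝ)
    (hv : ∀ i, 0 ≤ v i) : ∀ i, 0 ≤ A.mulVec v i := by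
  intro i
  exact Finset.sum_nonneg fun j _ => mul_nonneg (hA i j) (hv j)

/-- Collatz–Wielandt upper bound from a positive eigenvector. -/
lemma cw_bound (A : Matrix m m ℝ) (hA : ∀ i j, 0 ≤ A i j) (r : ℝ) (x : m → ℝ)
    (hx : ∀ i, 0 < x i) (hAx : A.mulVec x = r • x) (t : ℝ) (y : m → ℝ)
    (hy : ∀ i, 0 ≤ y i) (hy0 : y ≠ 0) (hty : ∀ i, t * y i ≤ A.mulVec y i) : t ≤ r := by
  classical
  have hne : (Finset.univ : Finset m).Nonempty := by
    obtain ⟨j, hj⟩ := Function.ne_iff.mp hy0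
    exact ⟨j, Finset.mem_univ j⟩
  obtain ⟨i0, -, hi0⟩ := Finset.exists_max_image Finset.univ (fun i => y i / x i) hne
  set μ := y i0 / x i0 with hμ
  have hyx : ∀ i, y i ≤ μ * x i := by
    intro i
    have := hi0 i (Finset.mem_univ i)
    calc y i = (y i / x i) * x i := by rw [div_mul_cancel₀ _ (hx i).ne']
    _ ≤ μ * x i := by
        exact mul_le_mul_of_nonneg_right this (le_of_lt (hx i))
  have hμpos : 0 < μ := by
    obtain ⟨j, hj⟩ := Function.ne_iff.mp hy0
    have hyj : 0 < y j := lt_of_le_of_ne (hy j) (Ne.symm hj)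
    have : 0 < y j / x j := div_pos hyj (hx j)
    exact lt_of_lt_of_le this (hi0 j (Finset.mem_univ j))
  have hyi0 : y i0 = μ * x i0 := by rw [hμ, div_mul_cancel₀ _ (hx i0).ne']
  have key : t * y i0 ≤ r * y i0 := by
    calc t * y i0 ≤ A.mulVec y i0 := hty i0
    _ ≤ A.mulVec (fun i => μ * x i) i0 := by
        apply Finset.sum_le_sum
        intro j _
        exact mul_le_mul_of_nonneg_left (hyx j) (hA i0 j)
    _ = μ * (A.mulVec x i0) := by
        simp only [Matrix.mulVec, dotProduct, Finset.mul_sum]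
        exact Finset.sum_congr rfl fun j _ => by ring
    _ = μ * (r * x i0) := by rw [hAx]; simp [mul_comm]
    _ = r * y i0 := by rw [hyi0]; ring
  have hyi0pos : 0 < y i0 := by rw [hyi0]; exact mul_pos hμpos (hx i0)
  exact le_of_mul_le_mul_right (by linarith) hyi0pos

/-- Eigenvectors of a strictly positive matrix for an eigenvalue with a positive
eigenvector are multiples of it. -/
lemma positive_simple [Nonempty m] (B : Matrix m m ℝ) (hB : ∀ i j, 0 < B i j) (r : ℝ) (x : m → ℝ)
    (hx : ∀ i, 0 < x i) (hBx : B.mulVec x = r • x) (u : m → ℝ)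
    (hu : B.mulVec u = r • u) : ∃ κ : ℝ, u = κ • x := by
  classical
  have hne : (Finset.univ : Finset m).Nonempty := ⟨Classical.arbitrary m, Finset.mem_univ _⟩
  obtain ⟨i0, -, hi0⟩ := Finset.exists_max_image Finset.univ (fun i => -(u i / x i)) hne
  set κ := u i0 / x i0 with hκ
  have hκle : ∀ i, κ ≤ u i / x i := by
    intro i
    have := hi0 i (Finset.mem_univ i)
    linarith
  set w : m → ℝ := fun i => u i - κ * x i with hw
  have hwnn : ∀ i, 0 ≤ w i := by
    intro i
    have := hκle i
    have hxi := hx i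
    have : κ * x i ≤ u i := by
      have := mul_le_mul_of_nonneg_right (hκle i) (le_of_lt hxi)
      calc κ * x i ≤ (u i / x i) * x i := this
      _ = u i := div_mul_cancel₀ _ (hx i).ne'
    simp only [hw]; linarith
  have hwi0 : w i0 = 0 := by
    simp only [hw, hκ]
    rw [div_mul_cancel₀ _ (hx i0).ne', sub_self]
  have hBw : B.mulVec w = r • w := by
    have : w = u - κ • x := by funext i; simp [hw, mul_comm]
    rw [this, Matrix.mulVec_sub, Matrix.mulVec_smul, hBx, hu]
    ext i; simp [smul_sub]; ring
  by_cases hw0 : w = 0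
  · refine ⟨κ, ?_⟩
    funext i
    have := congrFun hw0 i
    simp [hw] at this
    simp [Pi.smul_apply, smul_eq_mul]
    linarith
  · exfalso
    obtain ⟨j, hj⟩ := Function.ne_iff.mp hw0
    have hwj : 0 < w j := lt_of_le_of_ne (hwnn j) (Ne.symm hj)
    have hpos : 0 < B.mulVec w i0 := by
      apply Finset.sum_pos' (fun l _ => mul_nonneg (le_of_lt (hB i0 l)) (hwnn l))
      exact ⟨j, Finset.mem_univ j, mul_pos (hB i0 j) hwj⟩
    rw [hBw] at hpos
    simp [hwi0] at hpos

end PerronGeneral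

section PerronExist
variable {m : Type*} [Fintype m] [DecidableEq m]

set_option linter.unusedSectionVars false

theorem perron_positive [Nonempty m] (B : Matrix m m ℝ) (hB : ∀ i j, 0 < B i j) :
    ∃ (r : ℝ) (x : m → ℝ), 0 < r ∧ (∀ i, 0 < x i) ∧ B.mulVec x = r • x := by
  classical
  set S : Set (ℝ × (m → ℝ)) :=
    {p | 0 ≤ p.1 ∧ (∀ i, 0 ≤ p.2 i) ∧ (∑ i, p.2 i) = 1 ∧ ∀ i, p.1 * p.2 i ≤ B.mulVec p.2 i}
    with hS
  have hmulcont : ∀ i : m, Continuous fun p : ℝ × (m → ℝ) => B.mulVec p.2 i := by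
    intro i
    simp only [Matrix.mulVec, dotProduct]
    exact continuous_finset_sum _ fun j _ =>
      continuous_const.mul ((continuous_apply j).comp continuous_snd)
  have hSclosed : IsClosed S := by
    apply IsClosed.inter
    · exact isClosed_le continuous_const continuous_fst
    apply IsClosed.inter
    · show IsClosed {p : ℝ × (m → ℝ) | ∀ i, 0 ≤ p.2 i}
      rw [Set.setOf_forall]
      exact isClosed_iInter fun i =>
        isClosed_le continuous_const ((continuous_apply i).comp continuous_snd)
    apply IsClosed.inter
    · exact isClosed_eq (continuous_finset_sum _ fun j _ =>
        (continuous_apply j).comp continuous_snd) continuous_const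
    · show IsClosed {p : ℝ × (m → ℝ) | ∀ i, p.1 * p.2 i ≤ B.mulVec p.2 i}
      rw [Set.setOf_forall]
      exact isClosed_iInter fun i =>
        isClosed_le (continuous_fst.mul ((continuous_apply i).comp continuous_snd)) (hmulcont i)
  have hSbounded : Bornology.IsBounded S := by
    set M : ℝ := (∑ i, ∑ j, B i j) + 1 with hM
    have hM1 : 1 ≤ M := by
      have : 0 ≤ ∑ i, ∑ j, B i j :=
        Finset.sum_nonneg fun i _ => Finset.sum_nonneg fun j _ => (hB i j).le
      simp [hM]; linarith
    apply (Metric.isBounded_closedBall (x := (0 : ℝ × (m → ℝ))) (r := M)).subset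
    intro p hp
    obtain ⟨hp1, hp2, hp3, hp4⟩ := hp
    have hcoord : ∀ i, p.2 i ≤ 1 := by
      intro i
      calc p.2 i = ∑ j ∈ {i}, p.2 j := by simp
      _ ≤ ∑ j, p.2 j := Finset.sum_le_sum_of_subset_of_nonneg (Finset.subset_univ _)
          (fun j _ _ => hp2 j)
      _ = 1 := hp3
    have hp1le : p.1 ≤ M := by
      have h1 : p.1 = ∑ i, p.1 * p.2 i := by
        rw [← Finset.mul_sum, hp3, mul_one]
      have h2 : ∑ i, p.1 * p.2 i ≤ ∑ i, B.mulVec p.2 i :=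
        Finset.sum_le_sum fun i _ => hp4 i
      have h3 : ∑ i, B.mulVec p.2 i ≤ ∑ i, ∑ j, B i j := by
        apply Finset.sum_le_sum
        intro i _
        apply Finset.sum_le_sum
        intro j _
        calc B i j * p.2 j ≤ B i j * 1 := by
              exact mul_le_mul_of_nonneg_left (hcoord j) (hB i j).le
        _ = B i j := mul_one _
      rw [hM]; linarith
    rw [Metric.mem_closedBall, dist_zero_right, Prod.norm_def]
    apply max_le
    · rw [Real.norm_eq_abs, abs_le]; constructor <;> [linarith; linarith]
    · rw [pi_norm_le_iff_of_nonneg (by linarith)]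
      intro i
      rw [Real.norm_eq_abs, abs_le]
      constructor
      · have := hp2 i; linarith
      · have := hcoord i; linarith
  have hScompact : IsCompact S := Metric.isCompact_of_isClosed_isBounded hSclosed hSbounded
  -- nonempty
  set x0 : m → ℝ := fun _ => ((Fintype.card m : ℝ))⁻¹ with hx0
  have hcard : 0 < (Fintype.card m : ℝ) := by
    have := Fintype.card_pos (α := m)
    exact_mod_cast this
  set t0 : ℝ := Finset.min' (Finset.univ.image fun i => ∑ j, B i j)
    ((Finset.univ_nonempty).image _) with ht0
  have ht0mem := Finset.min'_mem (Finset.univ.image fun i => ∑ j, B i j)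
    ((Finset.univ_nonempty).image _)
  have ht0pos : 0 < t0 := by
    obtain ⟨i, -, hi⟩ := Finset.mem_image.mp ht0mem
    rw [← ht0] at hi
    rw [← hi]
    exact Finset.sum_pos (fun j _ => hB i j) Finset.univ_nonempty
  have ht0le : ∀ i, t0 ≤ ∑ j, B i j := fun i =>
    Finset.min'_le _ _ (Finset.mem_image_of_mem _ (Finset.mem_univ i))
  have hsum0 : (∑ i, x0 i) = 1 := by
    simp only [hx0, Finset.sum_const, Finset.card_univ, nsmul_eq_mul]
    field_simp
  have hmem : (t0, x0) ∈ S := by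
    refine ⟨le_of_lt ht0pos, fun i => by positivity, hsum0, ?_⟩
    intro i
    have h1 : B.mulVec x0 i = (∑ j, B i j) * (Fintype.card m : ℝ)⁻¹ := by
      simp [Matrix.mulVec, dotProduct, hx0, Finset.sum_mul]
    show t0 * x0 i ≤ B.mulVec x0 i
    rw [h1, hx0]
    exact mul_le_mul_of_nonneg_right (ht0le i) (by positivity)
  have hSne : S.Nonempty := ⟨(t0, x0), hmem⟩
  obtain ⟨⟨r, x⟩, hrxS, hmax⟩ := hScompact.exists_isMaxOn hSne continuous_fst.continuousOn
  obtain ⟨hr0, hxnn, hxsum, hrx⟩ := hrxS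
  have hmax' : ∀ p ∈ S, p.1 ≤ r := fun p hp => hmax hp
  have hrt0 : t0 ≤ r := hmax' (t0, x0) hmem
  have hrpos : 0 < r := lt_of_lt_of_le ht0pos hrt0
  -- B x ≥ r x with equality
  have hxj : ∃ j, 0 < x j := by
    by_contra h
    push_neg at h
    have : ∀ j, x j = 0 := fun j => le_antisymm (h j) (hxnn j)
    rw [Finset.sum_congr rfl (fun j _ => this j)] at hxsum
    simp at hxsum
  set d : m → ℝ := fun i => B.mulVec x i - r * x i with hd
  have hdnn : ∀ i, 0 ≤ d i := fun i => by simp only [hd]; linarith [hrx i]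
  have hdeq : d = 0 := by
    by_contra hd0
    obtain ⟨jd, hjd⟩ := Function.ne_iff.mp hd0
    have hjdpos : 0 < d jd := lt_of_le_of_ne (hdnn jd) (Ne.symm hjd)
    set y : m → ℝ := B.mulVec x with hy
    have hypos : ∀ i, 0 < y i := by
      intro i
      obtain ⟨j, hj⟩ := hxj
      apply Finset.sum_pos'
      · exact fun l _ => mul_nonneg (hB i l).le (hxnn l)
      · exact ⟨j, Finset.mem_univ j, mul_pos (hB i j) hj⟩
    have hBdpos : ∀ i, 0 < B.mulVec d i := by
      intro i
      apply Finset.sum_pos'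
      · exact fun l _ => mul_nonneg (hB i l).le (hdnn l)
      · exact ⟨jd, Finset.mem_univ jd, mul_pos (hB i jd) hjdpos⟩
    set ε : ℝ := Finset.min' (Finset.univ.image fun i => B.mulVec d i / y i)
      (Finset.univ_nonempty.image _) with hε
    have hεpos : 0 < ε := by
      obtain ⟨i, -, hi⟩ := Finset.mem_image.mp (Finset.min'_mem _ (Finset.univ_nonempty.image
        (fun i => B.mulVec d i / y i)))
      rw [← hε] at hi
      rw [← hi]
      exact div_pos (hBdpos i) (hypos i)
    have hεle : ∀ i, ε * y i ≤ B.mulVec d i := by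
      intro i
      have h1 : ε ≤ B.mulVec d i / y i :=
        Finset.min'_le _ _ (Finset.mem_image_of_mem _ (Finset.mem_univ i))
      rw [← le_div_iff₀ (hypos i)]
      exact h1
    -- B y ≥ (r+ε) y
    have hBy : ∀ i, (r + ε) * y i ≤ B.mulVec y i := by
      intro i
      have hyeq : y = r • x + d := by
        funext j
        simp only [hd, Pi.add_apply, Pi.smul_apply, smul_eq_mul]
        ring
      have h2 : B.mulVec y i = r * B.mulVec x i + B.mulVec d i := by
        rw [hyeq, Matrix.mulVec_add, Matrix.mulVec_smul]
        simp [smul_eq_mul]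
      have h3 : y i = B.mulVec x i := rfl
      have := hεle i
      rw [h2, ← h3]
      linarith
    set s : ℝ := ∑ i, y i with hs
    have hspos : 0 < s := Finset.sum_pos (fun i _ => hypos i) Finset.univ_nonempty
    have hmem2 : ((r + ε), s⁻¹ • y) ∈ S := by
      refine ⟨by linarith, fun i => ?_, ?_, ?_⟩
      · show 0 ≤ s⁻¹ * y i
        have := hypos i
        positivity
      · show (∑ i, s⁻¹ * y i) = 1
        rw [← Finset.mul_sum, ← hs]
        field_simp
      · intro i
        show (r + ε) * (s⁻¹ • y) i ≤ B.mulVec (s⁻¹ • y) i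
        rw [Matrix.mulVec_smul]
        simp only [Pi.smul_apply, smul_eq_mul]
        rw [mul_left_comm]
        apply mul_le_mul_of_nonneg_left (hBy i) (by positivity)
    have := hmax' _ hmem2
    simp only at this
    linarith
  -- conclude
  have hBxr : B.mulVec x = r • x := by
    funext i
    have := congrFun hdeq i
    simp only [hd, Pi.zero_apply] at this
    simp only [Pi.smul_apply, smul_eq_mul]
    linarith
  refine ⟨r, x, hrpos, ?_, hBxr⟩
  intro i
  have : x i = r⁻¹ * B.mulVec x i := by
    rw [hBxr]
    simp only [Pi.smul_apply, smul_eq_mul]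
    field_simp
  rw [this]
  obtain ⟨j, hj⟩ := hxj
  have : 0 < B.mulVec x i := by
    apply Finset.sum_pos'
    · exact fun l _ => mul_nonneg (hB i l).le (hxnn l)
    · exact ⟨j, Finset.mem_univ j, mul_pos (hB i j) hj⟩
  positivity

section PerronIrred
variable {m : Type*} [Fintype m] [DecidableEq m]
set_option linter.unusedSectionVars false

/-- Paths give positive entries of powers. -/
lemma reach_pow_pos (M : Matrix m m ℝ) (hM : ∀ i j, 0 ≤ M i j) {i j : m}
    (h : Relation.ReflTransGen (fun a b => 0 < M a b) i j) :
    ∃ k, 0 < (M ^ k) i j := by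
  induction h using Relation.ReflTransGen.head_induction_on with
  | refl => exact ⟨0, by simp [Matrix.one_apply]⟩
  | head hab _ ih =>
    obtain ⟨k, hk⟩ := ih
    rename_i a c _
    refine ⟨k + 1, ?_⟩
    rw [pow_succ']
    rw [Matrix.mul_apply]
    apply Finset.sum_pos' (fun l _ => mul_nonneg (hM a l) (pow_entry_nonneg M hM k l j))
    exact ⟨c, Finset.mem_univ c, mul_pos hab hk⟩

lemma pow_pos_step (M : Matrix m m ℝ) (hM : ∀ i j, 0 ≤ M i j) (hdiag : ∀ i, 0 < M i i)
    {i j : m} {k : ℕ} (h : 0 < (M ^ k) i j) : 0 < (M ^ (k + 1)) i j := by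
  rw [pow_succ, Matrix.mul_apply]
  apply Finset.sum_pos' (fun l _ => mul_nonneg (pow_entry_nonneg M hM k i l) (hM l j))
  exact ⟨j, Finset.mem_univ j, mul_pos h (hdiag j)⟩

lemma pow_pos_mono (M : Matrix m m ℝ) (hM : ∀ i j, 0 ≤ M i j) (hdiag : ∀ i, 0 < M i i)
    {i j : m} {k K : ℕ} (hkK : k ≤ K) (h : 0 < (M ^ k) i j) : 0 < (M ^ K) i j := by
  induction K with
  | zero => simpa [Nat.le_zero.mp hkK] using h
  | succ K ih =>
    rcases Nat.lt_or_ge k (K + 1) with hlt | hge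
    · exact pow_pos_step M hM hdiag (ih (Nat.lt_succ_iff.mp hlt))
    · have : k = K + 1 := le_antisymm hkK hge
      rwa [← this]

/-- For an irreducible nonnegative matrix, some power of `1 + A` is entrywise positive. -/
lemma irred_pow_pos (A : Matrix m m ℝ) (hA : ∀ i j, 0 ≤ A i j)
    (hirr : ∀ i j : m, Relation.ReflTransGen (fun a b => 0 < A a b) i j) :
    ∃ N : ℕ, ∀ i j, 0 < ((1 + A) ^ N) i j := by
  classical
  set M := (1 : Matrix m m ℝ) + A with hMdef
  have hM : ∀ i j, 0 ≤ M i j := by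
    intro i j
    simp only [hMdef, Matrix.add_apply, Matrix.one_apply]
    split
    · linarith [hA i j]
    · simpa using hA i j
  have hdiag : ∀ i, 0 < M i i := by
    intro i
    simp only [hMdef, Matrix.add_apply, Matrix.one_apply_eq]
    linarith [hA i i]
  have hedge : ∀ i j : m, 0 < A i j → 0 < M i j := by
    intro i j h
    simp only [hMdef, Matrix.add_apply, Matrix.one_apply]
    split
    · linarith
    · simpa using h
  have hreach : ∀ i j : m, ∃ k, 0 < (M ^ k) i j := by
    intro i j
    exact reach_pow_pos M hM (Relation.ReflTransGen.mono (fun a b h => hedge a b h) _ _ (hirr i j))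
  choose K hK using hreach
  refine ⟨Finset.sup Finset.univ (fun i => Finset.sup Finset.univ (K i)), ?_⟩
  intro i j
  apply pow_pos_mono M hM hdiag _ (hK i j)
  calc K i j ≤ Finset.sup Finset.univ (K i) := Finset.le_sup (Finset.mem_univ j)
  _ ≤ _ := Finset.le_sup (f := fun i => Finset.sup Finset.univ (K i)) (Finset.mem_univ i)

lemma pow_mulVec_eig (M : Matrix m m ℝ) (c : ℝ) (x : m → ℝ) (h : M.mulVec x = c • x) (k : ℕ) :
    (M ^ k).mulVec x = c ^ k • x := by
  induction k with
  | zero => simp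
  | succ k ih =>
    rw [pow_succ', ← Matrix.mulVec_mulVec, ih, Matrix.mulVec_smul, h, smul_smul]
    rw [show c ^ k * c = c ^ (k + 1) from (pow_succ c k).symm]

/-- Perron–Frobenius for an irreducible nonnegative matrix. -/
theorem perron_irred [Nonempty m] (A : Matrix m m ℝ) (hA : ∀ i j, 0 ≤ A i j)
    (hirr : ∀ i j : m, Relation.ReflTransGen (fun a b => 0 < A a b) i j) :
    ∃ (c : ℝ) (x : m → ℝ), 0 ≤ c ∧ (∀ i, 0 < x i) ∧ A.mulVec x = c • x ∧
      (∀ u : m → ℝ, A.mulVec u = c • u → ∃ κ : ℝ, u = κ • x) := by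
  classical
  obtain ⟨N, hN⟩ := irred_pow_pos A hA hirr
  set B := ((1 : Matrix m m ℝ) + A) ^ N with hB
  obtain ⟨r, x, hrpos, hxpos, hBx⟩ := perron_positive B hN
  -- A commutes with B
  have hcomm : A * B = B * A := by
    rw [hB]
    exact (Commute.add_right (Commute.one_right A) (Commute.refl A)).pow_right N |>.eq
  have hABx : B.mulVec (A.mulVec x) = r • A.mulVec x := by
    rw [Matrix.mulVec_mulVec, ← hcomm, ← Matrix.mulVec_mulVec, hBx, Matrix.mulVec_smul]
  obtain ⟨c, hc⟩ := positive_simple B hN r x hxpos hBx (A.mulVec x) hABx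
  have hAx : A.mulVec x = c • x := hc
  have hcnn : 0 ≤ c := by
    obtain ⟨i⟩ := (inferInstance : Nonempty m)
    have h1 : 0 ≤ A.mulVec x i := mulVec_nonneg A hA x (fun i => (hxpos i).le) i
    rw [hAx] at h1
    simp only [Pi.smul_apply, smul_eq_mul] at h1
    exact nonneg_of_mul_nonneg_left h1 (hxpos i)
  refine ⟨c, x, hcnn, hxpos, hAx, ?_⟩
  intro u hu
  -- B u = (1+c)^N u
  have h1A : ((1 : Matrix m m ℝ) + A).mulVec u = (1 + c) • u := by
    rw [Matrix.add_mulVec, Matrix.one_mulVec, hu]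
    funext i
    simp only [Pi.add_apply, Pi.smul_apply, smul_eq_mul]
    ring
  have hBu : B.mulVec u = (1 + c) ^ N • u := pow_mulVec_eig _ _ _ h1A N
  have h1Ax : ((1 : Matrix m m ℝ) + A).mulVec x = (1 + c) • x := by
    rw [Matrix.add_mulVec, Matrix.one_mulVec, hAx]
    funext i
    simp only [Pi.add_apply, Pi.smul_apply, smul_eq_mul]
    ring
  have hBx' : B.mulVec x = (1 + c) ^ N • x := pow_mulVec_eig _ _ _ h1Ax N
  have hr : r = (1 + c) ^ N := by
    obtain ⟨i⟩ := (inferInstance : Nonempty m)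
    have := congrFun hBx i
    rw [congrFun hBx' i] at this
    simp only [Pi.smul_apply, smul_eq_mul] at this
    exact (mul_right_cancel₀ (hxpos i).ne' this).symm
  rw [← hr] at hBu
  exact positive_simple B hN r x hxpos hBx u hBu

end PerronIrred

section Neumann
variable {m : Type*} [Fintype m] [DecidableEq m]
set_option linter.unusedSectionVars false

/-- Solving `(lam - A) u = b` with nonnegative `u` when `A` has a positive eigenvector with
eigenvalue `c < lam`. -/
theorem neumann_solve [Nonempty m] (A : Matrix m m ℝ) (hA : ∀ i j, 0 ≤ A i j) (c lam : ℝ)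
    (hclam : c < lam) (hc : 0 ≤ c) (x : m → ℝ) (hx : ∀ i, 0 < x i)
    (hAx : A.mulVec x = c • x) (b : m → ℝ) (hb : ∀ i, 0 ≤ b i) :
    ∃ u : m → ℝ, (∀ i, 0 ≤ u i) ∧ ∀ i, lam * u i - A.mulVec u i = b i := by
  classical
  have hlam : 0 < lam := lt_of_le_of_lt hc hclam
  -- bound on (A^k b) i
  obtain ⟨i₀⟩ : Nonempty m := inferInstance
  set X : ℝ := Finset.max' (Finset.univ.image x) (Finset.univ_nonempty.image x) with hX
  set ξ : ℝ := Finset.min' (Finset.univ.image x) (Finset.univ_nonempty.image x) with hξ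
  have hξpos : 0 < ξ := by
    obtain ⟨i, -, hi⟩ := Finset.mem_image.mp (Finset.min'_mem _ (Finset.univ_nonempty.image x))
    rw [← hξ] at hi; rw [← hi]; exact hx i
  have hxX : ∀ i, x i ≤ X := fun i => Finset.le_max' _ _ (Finset.mem_image_of_mem x (Finset.mem_univ i))
  have hxξ : ∀ i, ξ ≤ x i := fun i => Finset.min'_le _ _ (Finset.mem_image_of_mem x (Finset.mem_univ i))
  set Sb : ℝ := ∑ j, b j with hSb
  have hSbnn : 0 ≤ Sb := Finset.sum_nonneg fun j _ => hb j
  have hXpos : 0 < X := lt_of_lt_of_le (hx i₀) (hxX i₀)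
  have hXξ : 0 ≤ X / ξ := div_nonneg hXpos.le hξpos.le
  set K : ℝ := X / ξ * Sb with hK
  have hKnn : 0 ≤ K := mul_nonneg hXξ hSbnn
  -- key bound
  have hAkb : ∀ k i, (A ^ k).mulVec b i ≤ c ^ k * K := by
    intro k i
    have hAkx : (A ^ k).mulVec x = c ^ k • x := pow_mulVec_eig A c x hAx k
    have hent : ∀ j, (A ^ k) i j ≤ c ^ k * (X / ξ) := by
      intro j
      have h1 : (A ^ k) i j * x j ≤ c ^ k * x i := by
        have : (A ^ k) i j * x j ≤ ∑ l, (A ^ k) i l * x l :=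
          Finset.single_le_sum (f := fun l => (A ^ k) i l * x l)
            (fun l _ => mul_nonneg (pow_entry_nonneg A hA k i l) (hx l).le) (Finset.mem_univ j)
        calc (A ^ k) i j * x j ≤ ∑ l, (A ^ k) i l * x l := this
        _ = (A ^ k).mulVec x i := rfl
        _ = c ^ k * x i := by rw [hAkx]; simp
      have h2 : (A ^ k) i j ≤ c ^ k * x i / x j := by
        rw [le_div_iff₀ (hx j)]; exact h1
      calc (A ^ k) i j ≤ c ^ k * x i / x j := h2
      _ ≤ c ^ k * (X / ξ) := by
          rw [div_le_iff₀ (hx j)]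
          have hcc : (0:ℝ) ≤ c ^ k := pow_nonneg hc k
          have h3 : x i ≤ X := hxX i
          have h4 : ξ ≤ x j := hxξ j
          have h5 : X / ξ * x j ≥ X / ξ * ξ := mul_le_mul_of_nonneg_left h4 hXξ
          rw [div_mul_cancel₀ X hξpos.ne'] at h5
          calc c ^ k * x i ≤ c ^ k * X := mul_le_mul_of_nonneg_left h3 hcc
          _ ≤ c ^ k * (X / ξ * x j) := by
              apply mul_le_mul_of_nonneg_left _ hcc
              linarith
          _ = c ^ k * (X / ξ) * x j := by ring
    calc (A ^ k).mulVec b i = ∑ j, (A ^ k) i j * b j := rfl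
    _ ≤ ∑ j, c ^ k * (X / ξ) * b j :=
        Finset.sum_le_sum fun j _ => mul_le_mul_of_nonneg_right (hent j) (hb j)
    _ = c ^ k * K := by rw [hK, ← Finset.mul_sum, ← hSb]; ring
  have hAkbnn : ∀ k i, 0 ≤ (A ^ k).mulVec b i := fun k i =>
    mulVec_nonneg _ (pow_entry_nonneg A hA k) b hb i
  -- summability
  have hlaminv : (0:ℝ) ≤ lam⁻¹ := inv_nonneg.mpr hlam.le
  have hsumm : ∀ i, Summable (fun k : ℕ => lam⁻¹ ^ (k+1) * (A ^ k).mulVec b i) := by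
    intro i
    apply Summable.of_nonneg_of_le
    · intro k
      exact mul_nonneg (pow_nonneg hlaminv _) (hAkbnn k i)
    · intro k
      show lam⁻¹ ^ (k+1) * (A ^ k).mulVec b i ≤ lam⁻¹ * K * (c / lam) ^ k
      have h1 : lam⁻¹ ^ (k+1) * (A ^ k).mulVec b i ≤ lam⁻¹ ^ (k+1) * (c ^ k * K) :=
        mul_le_mul_of_nonneg_left (hAkb k i) (pow_nonneg hlaminv _)
      calc lam⁻¹ ^ (k+1) * (A ^ k).mulVec b i ≤ lam⁻¹ ^ (k+1) * (c ^ k * K) := h1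
      _ = lam⁻¹ * K * (c / lam) ^ k := by
          rw [div_pow, pow_succ]
          ring
    · apply Summable.mul_left
      apply summable_geometric_of_lt_one (div_nonneg hc hlam.le)
      rw [div_lt_one hlam]; exact hclam
  set u : m → ℝ := fun i => ∑' k : ℕ, lam⁻¹ ^ (k+1) * (A ^ k).mulVec b i with hu
  have hunn : ∀ i, 0 ≤ u i := by
    intro i
    exact tsum_nonneg fun k => mul_nonneg (pow_nonneg hlaminv _) (hAkbnn k i)
  refine ⟨u, hunn, ?_⟩
  intro i
  -- A u i = ∑' k, lam⁻¹^(k+1) * (A^(k+1) b) i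
  have hsum2 : ∀ j, Summable (fun k : ℕ => A i j * (lam⁻¹ ^ (k+1) * (A ^ k).mulVec b j)) :=
    fun j => (hsumm j).mul_left _
  have hAu : A.mulVec u i = ∑' k : ℕ, lam⁻¹ ^ (k+1) * (A ^ (k+1)).mulVec b i := by
    have h1 : A.mulVec u i = ∑ j, A i j * u j := rfl
    rw [h1]
    have h2 : ∀ j, A i j * u j = ∑' k : ℕ, A i j * (lam⁻¹ ^ (k+1) * (A ^ k).mulVec b j) := by
      intro j
      rw [hu]
      exact (tsum_mul_left).symm
    rw [Finset.sum_congr rfl (fun j _ => h2 j), ← Summable.tsum_finsetSum (fun j _ => hsum2 j)]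
    congr 1
    funext k
    have h3 : ∑ j, A i j * (lam⁻¹ ^ (k+1) * (A ^ k).mulVec b j)
        = lam⁻¹ ^ (k+1) * ∑ j, A i j * (A ^ k).mulVec b j := by
      rw [Finset.mul_sum]
      exact Finset.sum_congr rfl fun j _ => by ring
    rw [h3]
    congr 1
    have h4 : (A ^ (k+1)).mulVec b = A.mulVec ((A ^ k).mulVec b) := by
      rw [Matrix.mulVec_mulVec, ← pow_succ']
    rw [h4]
    rfl
  set f : ℕ → ℝ := fun k => lam⁻¹ ^ k * (A ^ k).mulVec b i with hf
  have hfid : ∀ k, lam * (lam⁻¹ ^ (k+1) * (A ^ k).mulVec b i) = f k := by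
    intro k
    rw [hf, pow_succ]
    field_simp
  have hfsumm : Summable f := by
    have : f = fun k => lam * (lam⁻¹ ^ (k+1) * (A ^ k).mulVec b i) := by
      funext k; rw [hfid k]
    rw [this]
    exact (hsumm i).mul_left lam
  have hlamu : lam * u i = ∑' k, f k := by
    rw [hu, ← tsum_mul_left]
    exact tsum_congr hfid
  have hAu2 : A.mulVec u i = ∑' k, f (k+1) := by
    rw [hAu]
  have hshift := Summable.tsum_eq_zero_add hfsumm
  have hf0 : f 0 = b i := by simp [hf, Matrix.one_mulVec]
  rw [hlamu, hAu2, hshift, hf0]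
  ring
end Neumann

section Spectrum
variable {m : Type*} [Fintype m] [DecidableEq m]
set_option linter.unusedSectionVars false

lemma mulVec_map_complex (A : Matrix m m ℝ) (v : m → ℝ) (i : m) :
    (A.map (algebraMap ℝ ℂ)).mulVec (fun j => (v j : ℂ)) i = ((A.mulVec v i : ℝ) : ℂ) := by
  simp only [Matrix.mulVec, dotProduct, Matrix.map_apply]
  push_cast
  rfl

theorem mem_spec_of_eig (A : Matrix m m ℝ) (c : ℝ) (x : m → ℝ) (hx : ∀ i, 0 < x i)
    (hAx : A.mulVec x = c • x) [Nonempty m] :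
    (c : ℂ) ∈ spectrum ℂ (A.map (algebraMap ℝ ℂ)) := by
  rw [spectrum.mem_iff]
  intro hunit
  rw [Matrix.isUnit_iff_isUnit_det, isUnit_iff_ne_zero] at hunit
  apply hunit
  rw [← Matrix.exists_mulVec_eq_zero_iff]
  refine ⟨fun j => (x j : ℂ), ?_, ?_⟩
  · intro h0
    obtain ⟨i⟩ := (inferInstance : Nonempty m)
    have := congrFun h0 i
    simp only [Pi.zero_apply, Complex.ofReal_eq_zero] at this
    exact (hx i).ne' this
  · rw [Matrix.sub_mulVec]
    funext i
    simp only [Pi.zero_apply]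
    rw [Algebra.algebraMap_eq_smul_one, Matrix.smul_mulVec, Matrix.one_mulVec]
    simp only [Pi.sub_apply, Pi.smul_apply, smul_eq_mul]
    rw [mulVec_map_complex, hAx]
    simp only [Pi.smul_apply, smul_eq_mul]
    push_cast
    ring

theorem spec_norm_le (A : Matrix m m ℝ) (hA : ∀ i j, 0 ≤ A i j) (c : ℝ) (x : m → ℝ)
    (hx : ∀ i, 0 < x i) (hAx : A.mulVec x = c • x) (μ : ℂ)
    (hμ : μ ∈ spectrum ℂ (A.map (algebraMap ℝ ℂ))) : ‖μ‖ ≤ c := by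
  rw [spectrum.mem_iff, Matrix.isUnit_iff_isUnit_det, isUnit_iff_ne_zero, not_not,
    ← Matrix.exists_mulVec_eq_zero_iff] at hμ
  obtain ⟨v, hv0, hv⟩ := hμ
  have hvA : (A.map (algebraMap ℝ ℂ)).mulVec v = μ • v := by
    rw [Matrix.sub_mulVec, Algebra.algebraMap_eq_smul_one, Matrix.smul_mulVec,
      Matrix.one_mulVec, sub_eq_zero] at hv
    exact hv.symm
  set u : m → ℝ := fun i => ‖v i‖ with hu
  have hunn : ∀ i, 0 ≤ u i := fun i => norm_nonneg _
  have hune : u ≠ 0 := by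
    obtain ⟨j, hj⟩ := Function.ne_iff.mp hv0
    exact Function.ne_iff.mpr ⟨j, by simp [hu]; exact hj⟩
  have hineq : ∀ i, ‖μ‖ * u i ≤ A.mulVec u i := by
    intro i
    have h1 : μ * v i = ∑ j, (A i j : ℂ) * v j := by
      have := congrFun hvA i
      simp only [Pi.smul_apply, smul_eq_mul] at this
      rw [← this]
      rfl
    calc ‖μ‖ * u i = ‖μ * v i‖ := by rw [hu]; simp [norm_mul]
    _ = ‖∑ j, (A i j : ℂ) * v j‖ := by rw [h1]
    _ ≤ ∑ j, ‖(A i j : ℂ) * v j‖ := norm_sum_le _ _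
    _ = ∑ j, A i j * u j := by
        apply Finset.sum_congr rfl
        intro j _
        rw [norm_mul, Complex.norm_real, Real.norm_eq_abs, abs_of_nonneg (hA i j), hu]
    _ = A.mulVec u i := rfl
  exact cw_bound A hA c x hx hAx ‖μ‖ u hunn hune hineq

theorem sSup_spec_eq (A : Matrix m m ℝ) (hA : ∀ i j, 0 ≤ A i j) (c : ℝ) (hc : 0 ≤ c)
    (x : m → ℝ) (hx : ∀ i, 0 < x i) (hAx : A.mulVec x = c • x) [Nonempty m] :
    sSup {r : ℝ | ∃ μ : ℂ, μ ∈ spectrum ℂ (A.map (algebraMap ℝ ℂ)) ∧ r = ‖μ‖} = c := by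
  apply le_antisymm
  · apply csSup_le
    · exact ⟨c, (c : ℂ), mem_spec_of_eig A c x hx hAx, by
        rw [Complex.norm_real, Real.norm_eq_abs, abs_of_nonneg hc]⟩
    · rintro r ⟨μ, hμ, rfl⟩
      exact spec_norm_le A hA c x hx hAx μ hμ
  · apply le_csSup
    · refine ⟨c, ?_⟩
      rintro r ⟨μ, hμ, rfl⟩
      exact spec_norm_le A hA c x hx hAx μ hμ
    · exact ⟨(c : ℂ), mem_spec_of_eig A c x hx hAx, by
        rw [Complex.norm_real, Real.norm_eq_abs, abs_of_nonneg hc]⟩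

end Spectrum


section ClassLemmas
variable {n : ℕ} (P : Matrix (Fin n) (Fin n) ℝ)

lemma access_refl (i : Fin n) : Access P i i := Relation.ReflTransGen.refl

lemma access_trans {i j k : Fin n} (h1 : Access P i j) (h2 : Access P j k) : Access P i k :=
  Relation.ReflTransGen.trans h1 h2

/-- The class of an index. -/
noncomputable def classOf (i : Fin n) : Finset (Fin n) :=
  @Finset.filter _ (fun j => Access P i j ∧ Access P j i) (Classical.decPred _) Finset.univ

lemma mem_classOf {i j : Fin n} : j ∈ classOf P i ↔ Access P i j ∧ Access P j i := by
  simp [classOf]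

lemma self_mem_classOf (i : Fin n) : i ∈ classOf P i :=
  (mem_classOf P).mpr ⟨access_refl P i, access_refl P i⟩

lemma isClass_classOf (i : Fin n) : IsClass P (classOf P i) :=
  ⟨i, self_mem_classOf P i, fun j => mem_classOf P⟩

lemma class_mutual {α : Finset (Fin n)} (hcl : IsClass P α) {i j : Fin n}
    (hi : i ∈ α) (hj : j ∈ α) : Access P i j ∧ Access P j i := by
  obtain ⟨i0, hi0, h⟩ := hcl
  obtain ⟨h1, h2⟩ := (h i).mp hi
  obtain ⟨h3, h4⟩ := (h j).mp hj
  exact ⟨access_trans P h2 h3, access_trans P h4 h1⟩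

lemma class_mem_of_mutual {α : Finset (Fin n)} (hcl : IsClass P α) {i j : Fin n}
    (hi : i ∈ α) (h1 : Access P i j) (h2 : Access P j i) : j ∈ α := by
  obtain ⟨i0, hi0, h⟩ := hcl
  obtain ⟨h3, h4⟩ := (h i).mp hi
  exact (h j).mpr ⟨access_trans P h3 h1, access_trans P h2 h4⟩

/-- Paths between elements of a class can be taken inside the class. -/
lemma access_within_class {α : Finset (Fin n)} (hcl : IsClass P α) {j : Fin n} (hj : j ∈ α) :
    ∀ {i : Fin n}, Access P i j → ∀ hi : i ∈ α,
      Relation.ReflTransGen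
        (fun a b : {x // x ∈ α} =>
          0 < P.submatrix (fun i : {x // x ∈ α} => (i : Fin n))
            (fun i : {x // x ∈ α} => (i : Fin n)) a b) ⟨i, hi⟩ ⟨j, hj⟩ := by
  intro i hacc
  induction hacc using Relation.ReflTransGen.head_induction_on with
  | refl => intro hi; exact Relation.ReflTransGen.refl
  | head hab hcb ih =>
    rename_i a c
    intro ha
    have hc : c ∈ α := by
      apply class_mem_of_mutual P hcl ha (Relation.ReflTransGen.single hab)
      exact access_trans P hcb (class_mutual P hcl hj ha).1
    exact Relation.ReflTransGen.head (by simpa using hab) (ih hc)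

lemma submatrix_irred {α : Finset (Fin n)} (hcl : IsClass P α) (a b : {x // x ∈ α}) :
    Relation.ReflTransGen
      (fun a b : {x // x ∈ α} =>
        0 < P.submatrix (fun i : {x // x ∈ α} => (i : Fin n))
          (fun i : {x // x ∈ α} => (i : Fin n)) a b) a b := by
  obtain ⟨a, ha⟩ := a
  obtain ⟨b, hb⟩ := b
  exact access_within_class P hcl hb (class_mutual P hcl ha hb).1 ha

lemma subtype_sum_eq {β : Finset (Fin n)} (i : Fin n) (z : Fin n → ℝ) :
    ∑ a : {x // x ∈ β}, P i (↑a) * z ↑a = ∑ j ∈ β, P i j * z j :=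
  Finset.sum_coe_sort β (fun j => P i j * z j)

end ClassLemmas

section MainLemmas
variable {n : ℕ}

lemma class_perron (P : Matrix (Fin n) (Fin n) ℝ) (hP : ∀ i j, 0 ≤ P i j)
    {β : Finset (Fin n)} (hcl : IsClass P β) (hne : β.Nonempty) :
    ∃ (c : ℝ) (x : {x // x ∈ β} → ℝ), 0 ≤ c ∧ (∀ a, 0 < x a) ∧
      (P.submatrix (fun i : {x // x ∈ β} => (i : Fin n))
        (fun i : {x // x ∈ β} => (i : Fin n))).mulVec x = c • x ∧
      subRad P β = c ∧
      (∀ u, (P.submatrix (fun i : {x // x ∈ β} => (i : Fin n))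
        (fun i : {x // x ∈ β} => (i : Fin n))).mulVec u = c • u → ∃ κ : ℝ, u = κ • x) := by
  haveI : Nonempty {x // x ∈ β} := ⟨⟨hne.choose, hne.choose_spec⟩⟩
  obtain ⟨c, x, hc, hx, hAx, huniq⟩ := perron_irred
    (P.submatrix (fun i : {x // x ∈ β} => (i : Fin n)) (fun i : {x // x ∈ β} => (i : Fin n)))
    (fun a b => hP _ _) (submatrix_irred P hcl)
  exact ⟨c, x, hc, hx, hAx, sSup_spec_eq _ (fun a b => hP _ _) c hc x hx hAx, huniq⟩

lemma lemN (P : Matrix (Fin n) (Fin n) ℝ) (hP : ∀ i j, 0 ≤ P i j) (lam : ℝ) :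
    ∀ C : Finset (Fin n),
    (∀ i ∈ C, ∀ j, Access P i j → Access P j i → j ∈ C) →
    (∀ i ∈ C, subRad P (classOf P i) < lam) →
    (∀ z : Fin n → ℝ, (∀ i, i ∉ C → z i = 0) →
        (∀ i ∈ C, (∑ j ∈ C, P i j * z j) = lam * z i) → z = 0) ∧
    (∀ b : Fin n → ℝ, (∀ i, 0 ≤ b i) → ∃ v : Fin n → ℝ, (∀ i, 0 ≤ v i) ∧
        (∀ i, i ∉ C → v i = 0) ∧ (∀ i ∈ C, lam * v i - ∑ j ∈ C, P i j * v j = b i)) := by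
  classical
  intro C
  induction C using Finset.strongInductionOn with
  | _ C ih =>
  intro hclosed hrad
  rcases C.eq_empty_or_nonempty with hC | hCne
  · subst hC
    constructor
    · intro z hz0 _
      funext i
      exact hz0 i (Finset.notMem_empty i)
    · intro b hb
      exact ⟨0, fun i => le_refl 0, fun i _ => rfl, fun i hi => (Finset.notMem_empty i hi).elim⟩
  · -- pick a maximal element
    obtain ⟨i₀, hi₀C, hmax⟩ := Finset.exists_max_image C
      (fun i => (@Finset.filter _ (fun j => Access P i j) (Classical.decPred _) C).card) hCne
    obtain ⟨c, xβ, hc0, hxβ, hAxβ, hsubβ, huniqβ⟩ :=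
      class_perron P hP (isClass_classOf P i₀) ⟨i₀, self_mem_classOf P i₀⟩
    have hi₀β : i₀ ∈ (classOf P i₀) := self_mem_classOf P i₀
    have hβC : (classOf P i₀) ⊆ C := fun j hj => by
      obtain ⟨h1, h2⟩ := (mem_classOf P).mp hj
      exact hclosed i₀ hi₀C j h1 h2
    -- maximality: anything in C accessing i₀ is in (classOf P i₀)
    have hmaxβ : ∀ j ∈ C, Access P j i₀ → j ∈ (classOf P i₀) := by
      intro j hjC hacc
      have hsub : (@Finset.filter _ (fun k => Access P i₀ k) (Classical.decPred _) C) ⊆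
          (@Finset.filter _ (fun k => Access P j k) (Classical.decPred _) C) := by
        intro k hk
        rw [Finset.mem_filter] at hk ⊢
        exact ⟨hk.1, access_trans P hacc hk.2⟩
      have hcard := hmax j hjC
      have heq := Finset.eq_of_subset_of_card_le hsub (le_trans hcard (le_refl _))
      have hj' : j ∈ (@Finset.filter _ (fun k => Access P j k) (Classical.decPred _) C) := by
        rw [Finset.mem_filter]; exact ⟨hjC, access_refl P j⟩
      rw [← heq, Finset.mem_filter] at hj'
      exact (mem_classOf P).mpr ⟨hj'.2, hacc⟩
    set C' : Finset (Fin n) := C \ (classOf P i₀) with hC'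
    have hC'ss : C' ⊂ C := by
      apply Finset.sdiff_ssubset (by intro x hx; exact hβC hx) ⟨i₀, hi₀β⟩
    have hC'closed : ∀ i ∈ C', ∀ j, Access P i j → Access P j i → j ∈ C' := by
      intro i hi j h1 h2
      rw [hC', Finset.mem_sdiff] at hi ⊢
      refine ⟨hclosed i hi.1 j h1 h2, ?_⟩
      intro hjβ
      apply hi.2
      obtain ⟨h3, h4⟩ := (mem_classOf P).mp hjβ
      exact (mem_classOf P).mpr ⟨access_trans P h3 h2, access_trans P h1 h4⟩
    have hC'rad : ∀ i ∈ C', subRad P (classOf P i) < lam := fun i hi =>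
      hrad i (Finset.mem_sdiff.mp hi).1
    obtain ⟨ihinj, ihsurj⟩ := ih C' hC'ss hC'closed hC'rad
    -- no edges from C' into (classOf P i₀)
    have hedge0 : ∀ i ∈ C', ∀ j ∈ (classOf P i₀), P i j = 0 := by
      intro i hi j hj
      by_contra hne0
      have hpos : 0 < P i j := lt_of_le_of_ne (hP i j) (Ne.symm hne0)
      have hacc : Access P i i₀ :=
        access_trans P (Relation.ReflTransGen.single hpos) ((mem_classOf P).mp hj).2
      have : i ∈ (classOf P i₀) := hmaxβ i (Finset.mem_sdiff.mp hi).1 hacc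
      exact (Finset.mem_sdiff.mp hi).2 this
    have hclam : c < lam := by
      have := hrad i₀ hi₀C
      rwa [hsubβ] at this
    have hlam0 : 0 < lam := lt_of_le_of_lt hc0 hclam
    haveI : Nonempty {x // x ∈ (classOf P i₀)} := ⟨⟨i₀, hi₀β⟩⟩
    have hsplit : ∀ (f : Fin n → ℝ), ∑ j ∈ C, f j = (∑ j ∈ C', f j) + ∑ j ∈ (classOf P i₀), f j := by
      intro f
      rw [hC']
      exact (Finset.sum_sdiff hβC).symm
    constructor
    · -- injectivity
      intro z hz0 heq
      have hzC' : ∀ i ∈ C', z i = 0 := by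
        set z' : Fin n → ℝ := fun i => if i ∈ C' then z i else 0 with hz'
        have h1 : z' = 0 := by
          apply ihinj
          · intro i hi; simp [hz', hi]
          · intro i hi
            have h2 : ∑ j ∈ C', P i j * z' j = ∑ j ∈ C', P i j * z j := by
              apply Finset.sum_congr rfl
              intro j hj
              simp [hz', hj]
            rw [h2]
            have h3 : ∑ j ∈ C, P i j * z j = ∑ j ∈ C', P i j * z j + ∑ j ∈ (classOf P i₀), P i j * z j :=
              hsplit _
            have h4 : ∑ j ∈ (classOf P i₀), P i j * z j = 0 := by
              apply Finset.sum_eq_zero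
              intro j hj
              rw [hedge0 i hi j hj, zero_mul]
            have h5 := heq i (Finset.mem_sdiff.mp hi).1
            have h6 : z' i = z i := by simp [hz', hi]
            rw [h6]
            rw [h3, h4, add_zero] at h5
            exact h5
        intro i hi
        have := congrFun h1 i
        simpa [hz', hi] using this
      -- now the (classOf P i₀) part
      set u : {x // x ∈ (classOf P i₀)} → ℝ := fun a => z ↑a with hu
      have hueq : (P.submatrix (fun i : {x // x ∈ (classOf P i₀)} => (i : Fin n))
          (fun i : {x // x ∈ (classOf P i₀)} => (i : Fin n))).mulVec u = lam • u := by
        funext a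
        have h5 := heq ↑a (hβC a.2)
        have h3 := hsplit (fun j => P ↑a j * z j)
        have h4 : ∑ j ∈ C', P ↑a j * z j = 0 := by
          apply Finset.sum_eq_zero
          intro j hj
          rw [hzC' j hj, mul_zero]
        rw [h3, h4, zero_add] at h5
        show ∑ b : {x // x ∈ (classOf P i₀)}, P ↑a ↑b * z ↑b = lam • u a
        rw [subtype_sum_eq P ↑a z, h5]
        simp [hu]
      have hu0 : u = 0 := by
        by_contra hu0
        -- |u| is a nonnegative "sub-eigenvector" for lam
        set w : {x // x ∈ (classOf P i₀)} → ℝ := fun a => |u a| with hw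
        have hwnn : ∀ a, 0 ≤ w a := fun a => abs_nonneg _
        have hwne : w ≠ 0 := by
          obtain ⟨a, ha⟩ := Function.ne_iff.mp hu0
          refine Function.ne_iff.mpr ⟨a, ?_⟩
          simp only [hw, Pi.zero_apply, abs_ne_zero]
          exact ha
        have hineq : ∀ a, lam * w a ≤ (P.submatrix (fun i : {x // x ∈ (classOf P i₀)} => (i : Fin n))
            (fun i : {x // x ∈ (classOf P i₀)} => (i : Fin n))).mulVec w a := by
          intro a
          have h7 := congrFun hueq a
          simp only [Pi.smul_apply, smul_eq_mul] at h7
          calc lam * w a = |lam * u a| := by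
                rw [hw, abs_mul, abs_of_nonneg hlam0.le]
          _ = |∑ b : {x // x ∈ (classOf P i₀)}, P ↑a ↑b * u b| := by rw [← h7]; rfl
          _ ≤ ∑ b : {x // x ∈ (classOf P i₀)}, |P ↑a ↑b * u b| := Finset.abs_sum_le_sum_abs _ _
          _ = ∑ b : {x // x ∈ (classOf P i₀)}, P ↑a ↑b * w b := by
              apply Finset.sum_congr rfl
              intro b _
              rw [abs_mul, abs_of_nonneg (hP _ _), hw]
          _ = _ := rfl
        have := cw_bound _ (fun a b => hP _ _) c xβ hxβ hAxβ lam w hwnn hwne hineq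
        linarith
      funext i
      by_cases hiC : i ∈ C
      · by_cases hiβ : i ∈ (classOf P i₀)
        · have := congrFun hu0 ⟨i, hiβ⟩
          simpa [hu] using this
        · exact hzC' i (Finset.mem_sdiff.mpr ⟨hiC, hiβ⟩)
      · exact hz0 i hiC
    · -- surjectivity
      intro b hb
      obtain ⟨v', hv'nn, hv'0, hv'eq⟩ := ihsurj b hb
      set b'' : {x // x ∈ (classOf P i₀)} → ℝ := fun a => b ↑a + ∑ j ∈ C', P ↑a j * v' j with hb''
      have hb''nn : ∀ a, 0 ≤ b'' a := by
        intro a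
        apply add_nonneg (hb _)
        exact Finset.sum_nonneg fun j _ => mul_nonneg (hP _ _) (hv'nn j)
      obtain ⟨u, hunn, hueq⟩ := neumann_solve _ (fun a b => hP _ _) c lam hclam hc0
        xβ hxβ hAxβ b'' hb''nn
      set v : Fin n → ℝ := fun i => if h : i ∈ (classOf P i₀) then u ⟨i, h⟩ else v' i with hv
      have hvβ : ∀ (i : Fin n) (h : i ∈ (classOf P i₀)), v i = u ⟨i, h⟩ := by
        intro i h; simp [hv, h]
      have hvC' : ∀ i ∈ C', v i = v' i := by
        intro i hi
        have : i ∉ (classOf P i₀) := (Finset.mem_sdiff.mp hi).2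
        simp [hv, this]
      refine ⟨v, ?_, ?_, ?_⟩
      · intro i
        by_cases h : i ∈ (classOf P i₀)
        · rw [hvβ i h]; exact hunn _
        · simp only [hv, dif_neg h]; exact hv'nn i
      · intro i hi
        have h1 : i ∉ (classOf P i₀) := fun h => hi (hβC h)
        have h2 : i ∉ C' := fun h => hi (Finset.mem_sdiff.mp h).1
        simp only [hv, dif_neg h1]
        exact hv'0 i h2
      · intro i hiC
        by_cases hiβ : i ∈ (classOf P i₀)
        · -- (classOf P i₀) equation
          have h7 : lam * u ⟨i, hiβ⟩ - ∑ bb : {x // x ∈ (classOf P i₀)}, P i ↑bb * u bb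
              = b i + ∑ j ∈ C', P i j * v' j := hueq ⟨i, hiβ⟩
          have h8 : ∑ bb : {x // x ∈ (classOf P i₀)}, P i ↑bb * u bb
              = ∑ j ∈ (classOf P i₀), P i j * v j := by
            rw [← subtype_sum_eq P i v]
            exact Finset.sum_congr rfl fun a _ => by rw [hvβ ↑a a.2]
          have h9 : ∑ j ∈ C', P i j * v j = ∑ j ∈ C', P i j * v' j := by
            apply Finset.sum_congr rfl
            intro j hj
            rw [hvC' j hj]
          rw [hsplit (fun j => P i j * v j), h9, hvβ i hiβ, ← h8]
          linarith
        · -- C' equation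
          have hiC' : i ∈ C' := Finset.mem_sdiff.mpr ⟨hiC, hiβ⟩
          have h7 := hv'eq i hiC'
          have h9 : ∑ j ∈ C', P i j * v j = ∑ j ∈ C', P i j * v' j := by
            apply Finset.sum_congr rfl
            intro j hj
            rw [hvC' j hj]
          have h10 : ∑ j ∈ (classOf P i₀), P i j * v j = 0 := by
            apply Finset.sum_eq_zero
            intro j hj
            rw [hedge0 i hiC' j hj, zero_mul]
          rw [hsplit (fun j => P i j * v j), h9, h10, add_zero, hvC' i hiC']
          exact h7

end MainLemmas

theorem distinguished_class_eigenvector {n : ℕ} (P : Matrix (Fin n) (Fin n) ℝ)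
    (hP : ∀ i j, 0 ≤ P i j) (α : Finset (Fin n)) (hα : IsDistinguishedClass P α) :
    ∃ x : Fin n → ℝ, (∀ i, 0 ≤ x i) ∧ P.mulVec x = subRad P α • x ∧
      {i | x i ≠ 0} = {i | ∃ j ∈ α, Access P i j} ∧
      ∀ y : Fin n → ℝ, (∀ i, 0 ≤ y i) → P.mulVec y = subRad P α • y →
        {i | y i ≠ 0} = {i | ∃ j ∈ α, Access P i j} → ∃ c : ℝ, 0 < c ∧ y = c • x := by
  classical
  have hclα : IsClass P α := hα.1
  have hdist := hα.2
  obtain ⟨i₀, hi₀α, -⟩ := hα.1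
  obtain ⟨c, xα, hc0, hxα, hAxα, hsubα, huniqα⟩ := class_perron P hP hclα ⟨i₀, hi₀α⟩
  set lam : ℝ := subRad P α with hlamdef
  have hlamc : lam = c := hsubα
  set W : Finset (Fin n) :=
    @Finset.filter _ (fun i => ∃ j ∈ α, Access P i j) (Classical.decPred _) Finset.univ with hW
  have hmemW : ∀ i, i ∈ W ↔ ∃ j ∈ α, Access P i j := by
    intro i; simp [hW]
  have hαW : α ⊆ W := fun i hi => (hmemW i).mpr ⟨i, hi, access_refl P i⟩
  set C : Finset (Fin n) := W \ α with hC
  have hmemC : ∀ i, i ∈ C ↔ (i ∈ W ∧ i ∉ α) := fun i => Finset.mem_sdiff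
  have haccW : ∀ i j, 0 < P i j → j ∈ W → i ∈ W := by
    intro i j hpos hjW
    obtain ⟨k, hk, hacc⟩ := (hmemW j).mp hjW
    exact (hmemW i).mpr ⟨k, hk, Relation.ReflTransGen.head hpos hacc⟩
  have hCclosed : ∀ i ∈ C, ∀ j, Access P i j → Access P j i → j ∈ C := by
    intro i hi j h1 h2
    obtain ⟨hiW, hiα⟩ := (hmemC i).mp hi
    obtain ⟨k, hk, hacc⟩ := (hmemW i).mp hiW
    have hjW : j ∈ W := (hmemW j).mpr ⟨k, hk, access_trans P h2 hacc⟩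
    refine (hmemC j).mpr ⟨hjW, ?_⟩
    intro hjα
    exact hiα (class_mem_of_mutual P hclα hjα h2 h1)
  have hCrad : ∀ i ∈ C, subRad P (classOf P i) < lam := by
    intro i hi
    obtain ⟨hiW, hiα⟩ := (hmemC i).mp hi
    obtain ⟨k, hk, hacc⟩ := (hmemW i).mp hiW
    apply hdist
    · exact isClass_classOf P i
    · intro heq
      apply hiα
      rw [← heq]
      exact self_mem_classOf P i
    · exact ⟨i, self_mem_classOf P i, k, hk, hacc⟩
  obtain ⟨hinj, hsurj⟩ := lemN P hP lam C hCclosed hCrad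
  have hlamposC : C.Nonempty → 0 < lam := by
    rintro ⟨i, hi⟩
    obtain ⟨c', x', hc'0, -, -, hsub', -⟩ :=
      class_perron P hP (isClass_classOf P i) ⟨i, self_mem_classOf P i⟩
    have := hCrad i hi
    rw [hsub'] at this
    linarith
  set xa : Fin n → ℝ := fun i => if h : i ∈ α then xα ⟨i, h⟩ else 0 with hxa
  have hxann : ∀ i, 0 ≤ xa i := by
    intro i
    by_cases h : i ∈ α
    · simp only [hxa]; rw [dif_pos h]; exact (hxα _).le
    · simp only [hxa]; rw [dif_neg h]
  set b : Fin n → ℝ := fun i => ∑ j ∈ α, P i j * xa j with hbdef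
  have hbnn : ∀ i, 0 ≤ b i := fun i =>
    Finset.sum_nonneg fun j _ => mul_nonneg (hP i j) (hxann j)
  obtain ⟨v, hvnn, hv0, hveq⟩ := hsurj b hbnn
  set x : Fin n → ℝ := fun i => xa i + v i with hx
  have hxnn : ∀ i, 0 ≤ x i := fun i => add_nonneg (hxann i) (hvnn i)
  have hαnotC : ∀ i ∈ α, i ∉ C := fun i hi hiC => ((hmemC i).mp hiC).2 hi
  have hxα' : ∀ (i) (hi : i ∈ α), x i = xα ⟨i, hi⟩ := by
    intro i hi
    simp only [hx]
    show xa i + v i = xα ⟨i, hi⟩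
    rw [hv0 i (hαnotC i hi), hxa, add_zero]
    exact dif_pos hi
  have hPαC : ∀ i ∈ α, ∀ j ∈ C, P i j = 0 := by
    intro i hi j hj
    by_contra h0
    have hpos : 0 < P i j := lt_of_le_of_ne (hP i j) (Ne.symm h0)
    obtain ⟨hjW, hjα⟩ := (hmemC j).mp hj
    obtain ⟨k, hk, hacc⟩ := (hmemW j).mp hjW
    exact hjα (class_mem_of_mutual P hclα hi (Relation.ReflTransGen.single hpos)
      (access_trans P hacc (class_mutual P hclα hk hi).1))
  have hPx : ∀ i, P.mulVec x i = (∑ j ∈ α, P i j * xa j) + ∑ j ∈ C, P i j * v j := by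
    intro i
    have h1 : P.mulVec x i = ∑ j, P i j * (xa j + v j) := rfl
    rw [h1, Finset.sum_congr rfl (fun j _ => (mul_add (P i j) (xa j) (v j))),
      Finset.sum_add_distrib]
    congr 1
    · symm
      apply Finset.sum_subset (Finset.subset_univ α)
      intro j _ hj
      simp only [hxa]
      rw [dif_neg hj, mul_zero]
    · symm
      apply Finset.sum_subset (Finset.subset_univ C)
      intro j _ hj
      rw [hv0 j hj, mul_zero]
  have hAa : ∀ (i) (hi : i ∈ α), ∑ j ∈ α, P i j * xa j = c * xα ⟨i, hi⟩ := by
    intro i hi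
    have h3 : ∑ a : {x // x ∈ α}, P i ↑a * xα a = c * xα ⟨i, hi⟩ := by
      have h := congrFun hAxα ⟨i, hi⟩
      simp only [Pi.smul_apply, smul_eq_mul] at h
      exact h
    rw [← subtype_sum_eq P i xa]
    rw [← h3]
    apply Finset.sum_congr rfl
    intro a _
    congr 1
    simp only [hxa]
    rw [dif_pos a.2]
  have heig : ∀ i, P.mulVec x i = lam * x i := by
    intro i
    rw [hPx i]
    by_cases hiα : i ∈ α
    · have h4 : ∑ j ∈ C, P i j * v j = 0 :=
        Finset.sum_eq_zero fun j hj => by rw [hPαC i hiα j hj, zero_mul]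
      rw [hAa i hiα, h4, add_zero, hxα' i hiα, hlamc]
    · by_cases hiC : i ∈ C
      · have h5 := hveq i hiC
        have hxi : x i = v i := by
          simp only [hx]
          show xa i + v i = v i
          simp only [hxa]
          rw [dif_neg hiα, zero_add]
        rw [hxi]
        have hbi : b i = ∑ j ∈ α, P i j * xa j := rfl
        linarith
      · have hiW : i ∉ W := fun h => hiC ((hmemC i).mpr ⟨h, hiα⟩)
        have h6 : ∑ j ∈ α, P i j * xa j = 0 := by
          apply Finset.sum_eq_zero
          intro j hj
          have : P i j = 0 := by
            by_contra h0
            exact hiW (haccW i j (lt_of_le_of_ne (hP i j) (Ne.symm h0)) (hαW hj))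
          rw [this, zero_mul]
        have h7 : ∑ j ∈ C, P i j * v j = 0 := by
          apply Finset.sum_eq_zero
          intro j hj
          have : P i j = 0 := by
            by_contra h0
            exact hiW (haccW i j (lt_of_le_of_ne (hP i j) (Ne.symm h0)) ((hmemC j).mp hj).1)
          rw [this, zero_mul]
        have hxi : x i = 0 := by
          simp only [hx]
          show xa i + v i = 0
          simp only [hxa]
          rw [dif_neg hiα, hv0 i hiC, add_zero]
        rw [h6, h7, hxi, add_zero, mul_zero]
  have hxpos : ∀ i ∈ W, 0 < x i := by
    intro i hiW
    obtain ⟨k, hk, hacc⟩ := (hmemW i).mp hiW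
    clear hiW
    induction hacc using Relation.ReflTransGen.head_induction_on with
    | refl =>
      rw [hxα' k hk]
      exact hxα _
    | head hab hrest ih =>
      rename_i a d
      by_cases haα : a ∈ α
      · rw [hxα' a haα]
        exact hxα _
      · have haW : a ∈ W := (hmemW a).mpr ⟨k, hk, Relation.ReflTransGen.head hab hrest⟩
        have haC : a ∈ C := (hmemC a).mpr ⟨haW, haα⟩
        have hlam0 : 0 < lam := hlamposC ⟨a, haC⟩
        have h5 : ∑ j, P a j * x j = lam * x a := heig a
        have h6 : P a d * x d ≤ ∑ j, P a j * x j :=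
          Finset.single_le_sum (f := fun j => P a j * x j)
            (fun j _ => mul_nonneg (hP a j) (hxnn j)) (Finset.mem_univ d)
        have h7 : 0 < P a d * x d := mul_pos hab ih
        have h8 : 0 < lam * x a := by linarith
        rcases lt_or_eq_of_le (hxnn a) with h | h
        · exact h
        · exfalso
          rw [← h, mul_zero] at h8
          exact lt_irrefl 0 h8
  have hsupp : ∀ i, x i ≠ 0 ↔ i ∈ W := by
    intro i
    constructor
    · intro hne
      by_contra hiW
      apply hne
      have hiα : i ∉ α := fun h => hiW (hαW h)
      have hiC : i ∉ C := fun h => hiW ((hmemC i).mp h).1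
      simp only [hx]
      show xa i + v i = 0
      simp only [hxa]
      rw [dif_neg hiα, hv0 i hiC, add_zero]
    · intro h
      exact (hxpos i h).ne'
  refine ⟨x, hxnn, ?_, ?_, ?_⟩
  · funext i
    rw [Pi.smul_apply, smul_eq_mul]
    exact heig i
  · ext i
    rw [Set.mem_setOf_eq, Set.mem_setOf_eq, hsupp i, hmemW i]
  · -- uniqueness
    intro y hynn hyeig hysupp
    have hyW : ∀ i, y i ≠ 0 ↔ i ∈ W := by
      intro i
      have h1 := Set.ext_iff.mp hysupp i
      rw [Set.mem_setOf_eq, Set.mem_setOf_eq] at h1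
      rw [h1, hmemW i]
    have hy0 : ∀ i, i ∉ W → y i = 0 := by
      intro i hi
      by_contra h0
      exact hi ((hyW i).mp h0)
    have hyeig' : ∀ i, ∑ j, P i j * y j = lam * y i := by
      intro i
      have h := congrFun hyeig i
      simp only [Pi.smul_apply, smul_eq_mul] at h
      exact h
    have hyα : (P.submatrix (fun i : {x // x ∈ α} => (i : Fin n))
        (fun i : {x // x ∈ α} => (i : Fin n))).mulVec (fun a => y ↑a)
        = c • (fun a : {x // x ∈ α} => y ↑a) := by
      funext a
      have hsplit2 : ∑ j, P ↑a j * y j = ∑ j ∈ α, P ↑a j * y j := by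
        symm
        apply Finset.sum_subset (Finset.subset_univ α)
        intro j _ hjα
        by_cases hjC : j ∈ C
        · rw [hPαC ↑a a.2 j hjC, zero_mul]
        · have hjW : j ∉ W := fun h => hjC ((hmemC j).mpr ⟨h, hjα⟩)
          rw [hy0 j hjW, mul_zero]
      show ∑ bb : {x // x ∈ α}, P ↑a ↑bb * y ↑bb = c • (fun a : {x // x ∈ α} => y ↑a) a
      rw [subtype_sum_eq P ↑a y, ← hsplit2, hyeig' ↑a]
      simp only [Pi.smul_apply, smul_eq_mul]
      rw [hlamc]
    obtain ⟨κ, hκ⟩ := huniqα (fun a => y ↑a) hyα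
    have hκpos : 0 < κ := by
      have h1 := congrFun hκ ⟨i₀, hi₀α⟩
      simp only [Pi.smul_apply, smul_eq_mul] at h1
      have h2 : 0 < y i₀ := by
        have h3 : y i₀ ≠ 0 := (hyW i₀).mpr (hαW hi₀α)
        exact lt_of_le_of_ne (hynn i₀) (Ne.symm h3)
      rw [h1] at h2
      by_contra hκ0
      push_neg at hκ0
      have : κ * xα ⟨i₀, hi₀α⟩ ≤ 0 := mul_nonpos_of_nonpos_of_nonneg hκ0 (hxα _).le
      linarith
    set z : Fin n → ℝ := fun i => y i - κ * x i with hz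
    have hzoff : ∀ i, i ∉ C → z i = 0 := by
      intro i hiC
      simp only [hz]
      show y i - κ * x i = 0
      by_cases hiα : i ∈ α
      · have h1 := congrFun hκ ⟨i, hiα⟩
        simp only [Pi.smul_apply, smul_eq_mul] at h1
        rw [hxα' i hiα, h1]
        ring
      · have hiW : i ∉ W := fun h => hiC ((hmemC i).mpr ⟨h, hiα⟩)
        have hxi : x i ≠ 0 → False := fun h => hiW ((hsupp i).mp h)
        have hxi0 : x i = 0 := by
          by_contra h
          exact hxi h
        rw [hy0 i hiW, hxi0]
        ring
    have hzeq : ∀ i ∈ C, ∑ j ∈ C, P i j * z j = lam * z i := by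
      intro i hiC
      have h8 : ∑ j ∈ C, P i j * z j = ∑ j, P i j * z j := by
        apply Finset.sum_subset (Finset.subset_univ C)
        intro j _ hjC
        rw [hzoff j hjC, mul_zero]
      have hx5 : ∑ j, P i j * x j = lam * x i := heig i
      have hy5 := hyeig' i
      have h9 : ∑ j, P i j * z j = ∑ j, P i j * y j - κ * ∑ j, P i j * x j := by
        rw [Finset.mul_sum, ← Finset.sum_sub_distrib]
        apply Finset.sum_congr rfl
        intro j _
        simp only [hz]
        show P i j * (y j - κ * x j) = _
        ring
      rw [h8, h9, hx5, hy5, hz]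
      show lam * y i - κ * (lam * x i) = lam * (y i - κ * x i)
      ring
    have hz0 : z = 0 := hinj z hzoff hzeq
    refine ⟨κ, hκpos, ?_⟩
    funext i
    have h1 := congrFun hz0 i
    simp only [hz] at h1
    simp only [Pi.zero_apply] at h1
    have h2 : y i - κ * x i = 0 := h1
    rw [Pi.smul_apply, smul_eq_mul]
    linarith
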